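/- The sum of two q-holonomic functions is q-holonomic: if f, g : Z^r -> V generate q-holonomic cyclic modules over the quantum Weyl algebra W_r, then so does f + g. -/

import Mathlib

noncomputable section

/-- The variable `q` in the field `ℚ(q)` of rational functions. -/
def q : RatFunc ℚ := RatFunc.X

/-- The quantum integer `[k] = (q^k - q^{-k})/(q - q⁻¹)` for `k : ℤ`. -/
def qint (k : ℤ) : RatFunc ℚ := (q ^ k - q ^ (-k)) / (q - q⁻¹)

/-- The quantum factorial `[s]! = ∏_{k=1}^s [k]`. -/
def qfact (s : ℕ) : RatFunc ℚ := ∏ k ∈ Finset.range s, qint ((k : ℤ) + 1)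

/-- The quantum binomial `[r choose s] = (∏_{k=r-s+1}^r [k]) / [s]!` for `r s : ℤ`,
with the convention that it is `0` for `s < 0`. -/
def qbinom (r s : ℤ) : RatFunc ℚ :=
  if s < 0 then 0
  else (∏ j ∈ Finset.range s.toNat, qint (r - (j : ℤ))) / qfact s.toNat

/-- `f : ℕ → ℚ(q)` is `q`-holonomic if it satisfies a nontrivial linear recurrence
`∑_{j=0}^d c_j(qⁿ, q) f(n+j) = 0` with `c_j ∈ ℚ[u,v]` and `c_d ≠ 0`. -/
def IsQHolonomic (f : ℕ → RatFunc ℚ) : Prop :=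
  ∃ d : ℕ, ∃ c : ℕ → MvPolynomial (Fin 2) ℚ, c d ≠ 0 ∧
    ∀ n : ℕ, ∑ j ∈ Finset.range (d + 1),
      (MvPolynomial.aeval ![q ^ n, q] (c j)) * f (n + j) = 0

/-!
Let `ℚ(u, v)` act on germs at infinity of sequences `ℕ → ℚ(q)` through `u ↦ qⁿ`, `v ↦ q`. This is
well defined because `q` is transcendental, so a nonzero `c ∈ ℚ[u, v]` has `c(qⁿ, q) ≠ 0` for all
large `n`. A sequence `h` is `q`-holonomic iff the `ℚ(u, v)`-span of the germs of its shifts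
`n ↦ h (n + m)` is finite-dimensional: a recurrence with `c_d ≠ 0` expresses every shift through
the first `d`, and conversely a linear dependence among shifts becomes, after clearing
denominators, a recurrence that holds for large `n`, hence for all `n` once multiplied by
`∏_{m < N} (u - vᵐ)`. The span for `f + g` lies in the sum of the spans for `f` and `g`.
-/

open Filter Finset

section

variable (K : Type*) {V : Type*} [DivisionRing K] [AddCommGroup V] [Module K V]

theorem exists_mem_span_fin_of_finiteDimensional (v : ℕ → V)
    [FiniteDimensional K (Submodule.span K (Set.range v))] :
    ∃ M, v M ∈ Submodule.span K (Set.range fun j : Fin M => v j) := by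
  by_contra! H
  have hli : ∀ n, LinearIndependent K fun j : Fin n => v j := by
    intro n
    induction n with
    | zero => exact linearIndependent_empty_type
    | succ n ih => exact linearIndependent_finSucc'.mpr ⟨ih, H n⟩
  set D := Module.finrank K (Submodule.span K (Set.range v))
  have hsub : Set.range (fun j : Fin (D + 1) => v j) ⊆ Set.range v :=
    Set.range_subset_iff.mpr fun j => Set.mem_range_self _
  have hle := Submodule.finrank_mono (Submodule.span_mono (R := K) hsub)
  rw [finrank_span_eq_card (hli (D + 1)), Fintype.card_fin] at hle
  omega

theorem exists_sum_range_smul_eq_zero_of_finiteDimensional (v : ℕ → V)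
    [FiniteDimensional K (Submodule.span K (Set.range v))] :
    ∃ M, ∃ b : ℕ → K, b M ≠ 0 ∧ ∑ j ∈ range (M + 1), b j • v j = 0 := by
  obtain ⟨M, hM⟩ := exists_mem_span_fin_of_finiteDimensional K v
  obtain ⟨b, hb⟩ := (Submodule.mem_span_range_iff_exists_fun K).mp hM
  let b' : ℕ → K := fun j => if hj : j < M then b ⟨j, hj⟩ else -1
  refine ⟨M, b', by simp [b'], ?_⟩
  rw [sum_range_succ, ← Fin.sum_univ_eq_sum_range (fun j => b' j • v j)]
  simp [b', hb]

end

namespace QHolonomic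

abbrev Coeff : Type := MvPolynomial (Fin 2) ℚ

abbrev CoeffFrac : Type := FractionRing Coeff

abbrev SeqGerm : Type := Germ (atTop : Filter ℕ) (RatFunc ℚ)

lemma q_pow_injective : Function.Injective (q ^ · : ℕ → RatFunc ℚ) := by
  intro a b hab
  have h : (Polynomial.X ^ a : Polynomial ℚ) = Polynomial.X ^ b :=
    IsFractionRing.injective (Polynomial ℚ) (RatFunc ℚ) (by simpa [q] using hab)
  simpa using congrArg Polynomial.natDegree h

lemma aeval_q_injective :
    Function.Injective (MvPolynomial.aeval ![q] : MvPolynomial (Fin 1) ℚ →ₐ[ℚ] RatFunc ℚ) :=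
  algebraicIndependent_iff_transcendental.mpr <| by
    rw [q, ← RatFunc.algebraMap_X, transcendental_algebraMap_iff (RatFunc.algebraMap_injective ℚ)]
    exact Polynomial.transcendental_X ℚ

lemma eval₂_finSuccEquiv (c : Coeff) (x : RatFunc ℚ) :
    (MvPolynomial.finSuccEquiv ℚ 1 c).eval₂ (MvPolynomial.aeval ![q]).toRingHom x
      = MvPolynomial.aeval ![x, q] c := by
  have : (Polynomial.eval₂RingHom (MvPolynomial.aeval ![q]).toRingHom x).comp
      (MvPolynomial.finSuccEquiv ℚ 1).toRingHom = (MvPolynomial.aeval ![x, q]).toRingHom := by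
    refine MvPolynomial.ringHom_ext (fun r => by simp [MvPolynomial.finSuccEquiv_apply]) ?_
    intro i
    refine Fin.cases ?_ (fun j => ?_) i
    · simp [MvPolynomial.finSuccEquiv_X_zero]
    · rw [Fin.fin_one_eq_zero j]
      change Polynomial.eval₂ _ x (MvPolynomial.finSuccEquiv ℚ 1 (MvPolynomial.X (Fin.succ 0))) = _
      rw [MvPolynomial.finSuccEquiv_X_succ]
      simp
  exact congr($this c)

lemma eventually_aeval_ne_zero {c : Coeff} (hc : c ≠ 0) :
    ∀ᶠ n in atTop, MvPolynomial.aeval ![q ^ n, q] c ≠ 0 := by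
  set P := (MvPolynomial.finSuccEquiv ℚ 1 c).map (MvPolynomial.aeval ![q]).toRingHom
  have hP : P ≠ 0 := (Polynomial.map_ne_zero_iff aeval_q_injective).mpr (by simpa using hc)
  rw [← Nat.cofinite_eq_atTop]
  filter_upwards [((Polynomial.finite_setOfPred_isRoot hP).preimage
    q_pow_injective.injOn).eventually_cofinite_notMem] with n hn
  rwa [← eval₂_finSuccEquiv, ← Polynomial.eval_map]

def shiftCoeff (t : ℕ) : Coeff →ₐ[ℚ] Coeff :=
  MvPolynomial.aeval ![MvPolynomial.X 0 * MvPolynomial.X 1 ^ t, MvPolynomial.X 1]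

lemma aeval_shiftCoeff (t n : ℕ) (c : Coeff) :
    MvPolynomial.aeval ![q ^ n, q] (shiftCoeff t c) = MvPolynomial.aeval ![q ^ (n + t), q] c := by
  rw [shiftCoeff, ← AlgHom.comp_apply, MvPolynomial.comp_aeval]
  congr 2
  funext i
  fin_cases i <;> simp [pow_add]

lemma shiftCoeff_ne_zero (t : ℕ) {c : Coeff} (hc : c ≠ 0) : shiftCoeff t c ≠ 0 := by
  intro H
  obtain ⟨n, hn⟩ := ((tendsto_add_atTop_nat t).eventually (eventually_aeval_ne_zero hc)).exists
  rw [← aeval_shiftCoeff, H, map_zero] at hn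
  exact hn rfl

def evalGerm : Coeff →+* SeqGerm :=
  (Germ.coeRingHom atTop).comp (RingHom.pi fun n => (MvPolynomial.aeval ![q ^ n, q]).toRingHom)

lemma evalGerm_apply (c : Coeff) :
    evalGerm c = ((fun n => MvPolynomial.aeval ![q ^ n, q] c : ℕ → RatFunc ℚ) : SeqGerm) :=
  rfl

lemma sum_evalGerm_mul (s : Finset ℕ) (c : ℕ → Coeff) (u : ℕ → ℕ → RatFunc ℚ) :
    ∑ j ∈ s, evalGerm (c j) * (u j : SeqGerm)
      = ((fun n => ∑ j ∈ s, MvPolynomial.aeval ![q ^ n, q] (c j) * u j n : ℕ → RatFunc ℚ) :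
          SeqGerm) := by
  calc ∑ j ∈ s, evalGerm (c j) * (u j : SeqGerm)
      = ∑ j ∈ s, Germ.coeRingHom atTop fun n => MvPolynomial.aeval ![q ^ n, q] (c j) * u j n := rfl
    _ = _ := by rw [← map_sum, Finset.sum_fn]; rfl

lemma isUnit_evalGerm {c : Coeff} (hc : c ≠ 0) : IsUnit (evalGerm c) := by
  refine .of_mul_eq_one
    ((fun n => (MvPolynomial.aeval ![q ^ n, q] c)⁻¹ : ℕ → RatFunc ℚ) : SeqGerm) ?_
  rw [evalGerm_apply, ← Germ.coe_mul, ← Germ.coe_one, Germ.coe_eq]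
  filter_upwards [eventually_aeval_ne_zero hc] with n hn using mul_inv_cancel₀ hn

instance : Algebra CoeffFrac SeqGerm :=
  (IsLocalization.lift (M := nonZeroDivisors Coeff) fun c =>
    isUnit_evalGerm (nonZeroDivisors.ne_zero c.2)).toAlgebra

lemma algebraMap_smul (c : Coeff) (s : SeqGerm) :
    algebraMap Coeff CoeffFrac c • s = evalGerm c * s := by
  rw [Algebra.smul_def, RingHom.algebraMap_toAlgebra, IsLocalization.lift_eq]

def shiftGerm (h : ℕ → RatFunc ℚ) (m : ℕ) : SeqGerm :=
  ((fun n => h (n + m) : ℕ → RatFunc ℚ) : SeqGerm)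

abbrev shiftSpan (h : ℕ → RatFunc ℚ) : Submodule CoeffFrac SeqGerm :=
  Submodule.span CoeffFrac (Set.range (shiftGerm h))

lemma shiftSpan_add_le (f g : ℕ → RatFunc ℚ) : shiftSpan (f + g) ≤ shiftSpan f ⊔ shiftSpan g :=
  Submodule.span_le.mpr <| Set.range_subset_iff.mpr fun m =>
    Submodule.add_mem_sup (Submodule.subset_span (Set.mem_range_self m))
      (Submodule.subset_span (Set.mem_range_self m))

lemma sum_smul_shiftGerm_add_eq_zero {h : ℕ → RatFunc ℚ} {d : ℕ} {c : ℕ → Coeff}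
    (hrec : ∀ n, ∑ j ∈ range (d + 1), MvPolynomial.aeval ![q ^ n, q] (c j) * h (n + j) = 0)
    (t : ℕ) :
    ∑ j ∈ range (d + 1), algebraMap Coeff CoeffFrac (shiftCoeff t (c j)) • shiftGerm h (j + t)
      = 0 := by
  simp only [algebraMap_smul, shiftGerm]
  rw [sum_evalGerm_mul, ← Germ.coe_zero, Germ.coe_eq]
  refine .of_forall fun n => (sum_congr rfl fun j _ => ?_).trans (hrec (n + t))
  rw [aeval_shiftCoeff, add_comm j t, add_assoc]

lemma shiftGerm_mem_span_of_rec {h : ℕ → RatFunc ℚ} {d : ℕ} {c : ℕ → Coeff} (hcd : c d ≠ 0)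
    (hrec : ∀ n, ∑ j ∈ range (d + 1), MvPolynomial.aeval ![q ^ n, q] (c j) * h (n + j) = 0)
    (m : ℕ) :
    shiftGerm h m ∈ Submodule.span CoeffFrac (Set.range fun j : Fin d => shiftGerm h j) := by
  induction m using Nat.strong_induction_on with
  | _ m ih =>
  obtain hm | ⟨t, rfl⟩ : m < d ∨ ∃ t, m = d + t :=
    (lt_or_ge m d).imp_right fun hm => ⟨m - d, by omega⟩
  · exact Submodule.subset_span ⟨⟨m, hm⟩, rfl⟩
  have hrel := sum_smul_shiftGerm_add_eq_zero hrec t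
  rw [sum_range_succ, add_eq_zero_iff_neg_eq] at hrel
  have hne : algebraMap Coeff CoeffFrac (shiftCoeff t (c d)) ≠ 0 :=
    (IsFractionRing.to_map_ne_zero_of_mem_nonZeroDivisors
      (mem_nonZeroDivisors_of_ne_zero (shiftCoeff_ne_zero t hcd)))
  rw [← Submodule.smul_mem_iff _ hne, ← hrel]
  refine neg_mem (Submodule.sum_mem _ fun j hj => Submodule.smul_mem _ _ (ih _ ?_))
  have := mem_range.mp hj
  omega

lemma finiteDimensional_shiftSpan {h : ℕ → RatFunc ℚ} (hh : IsQHolonomic h) :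
    FiniteDimensional CoeffFrac (shiftSpan h) := by
  obtain ⟨d, c, hcd, hrec⟩ := hh
  have :=
    FiniteDimensional.span_of_finite CoeffFrac (Set.finite_range fun j : Fin d => shiftGerm h j)
  exact Submodule.finiteDimensional_of_le <|
    Submodule.span_le.mpr <| Set.range_subset_iff.mpr (shiftGerm_mem_span_of_rec hcd hrec)

lemma isQHolonomic_of_eventually {h : ℕ → RatFunc ℚ} {d : ℕ} {c : ℕ → Coeff} (hcd : c d ≠ 0)
    (hrec : ∀ᶠ n in atTop,
      ∑ j ∈ range (d + 1), MvPolynomial.aeval ![q ^ n, q] (c j) * h (n + j) = 0) :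
    IsQHolonomic h := by
  obtain ⟨N, hN⟩ := eventually_atTop.mp hrec
  set Z : Coeff := ∏ m ∈ range N, (MvPolynomial.X 0 - MvPolynomial.X 1 ^ m)
  have hZ : ∀ n, MvPolynomial.aeval ![q ^ n, q] Z = ∏ m ∈ range N, (q ^ n - q ^ m) := by
    simp [Z]
  have hZN : Z ≠ 0 := ne_of_apply_ne (MvPolynomial.aeval ![q ^ N, q]) <| by
    rw [map_zero, hZ]
    exact prod_ne_zero_iff.mpr fun m hm =>
      sub_ne_zero.mpr (q_pow_injective.ne (mem_range.mp hm).ne')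
  refine ⟨d, fun j => Z * c j, mul_ne_zero hZN hcd, fun n => ?_⟩
  simp_rw [map_mul, mul_assoc, ← mul_sum]
  rcases lt_or_ge n N with hn | hn
  · rw [hZ, prod_eq_zero (mem_range.mpr hn) (sub_self _), zero_mul]
  · rw [hN n hn, mul_zero]

lemma isQHolonomic_of_sum_smul_shiftGerm_eq_zero {h : ℕ → RatFunc ℚ} {M : ℕ}
    {b : ℕ → CoeffFrac} (hbM : b M ≠ 0) (hrel : ∑ j ∈ range (M + 1), b j • shiftGerm h j = 0) :
    IsQHolonomic h := by
  obtain ⟨β, hβ⟩ :=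
    IsLocalization.exist_integer_multiples (nonZeroDivisors Coeff) (range (M + 1)) b
  choose! a ha using hβ
  have hβ0 : algebraMap Coeff CoeffFrac β ≠ 0 :=
    IsFractionRing.to_map_ne_zero_of_mem_nonZeroDivisors β.2
  have haM : a M ≠ 0 := by
    intro H
    have := ha M (self_mem_range_succ M)
    rw [H, map_zero, Algebra.smul_def, eq_comm] at this
    exact mul_ne_zero hβ0 hbM this
  refine isQHolonomic_of_eventually haM (Germ.coe_eq.mp ?_)
  calc _ = ∑ j ∈ range (M + 1), algebraMap Coeff CoeffFrac (a j) • shiftGerm h j := by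
        simp only [algebraMap_smul, shiftGerm, sum_evalGerm_mul]
    _ = algebraMap Coeff CoeffFrac β • ∑ j ∈ range (M + 1), b j • shiftGerm h j := by
        rw [smul_sum]
        refine sum_congr rfl fun j hj => ?_
        rw [ha j hj, Algebra.smul_def (β : Coeff), mul_smul]
    _ = _ := by rw [hrel, smul_zero]; rfl

theorem isQHolonomic_iff_finiteDimensional {h : ℕ → RatFunc ℚ} :
    IsQHolonomic h ↔ FiniteDimensional CoeffFrac (shiftSpan h) := by
  refine ⟨finiteDimensional_shiftSpan, fun _ => ?_⟩
  obtain ⟨M, b, hbM, hrel⟩ :=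
    exists_sum_range_smul_eq_zero_of_finiteDimensional CoeffFrac (shiftGerm h)
  exact isQHolonomic_of_sum_smul_shiftGerm_eq_zero hbM hrel

end QHolonomic

open QHolonomic

/-- The sum of two `q`-holonomic functions is `q`-holonomic. -/
theorem isQHolonomic_add (f g : ℕ → RatFunc ℚ)
    (hf : IsQHolonomic f) (hg : IsQHolonomic g) :
    IsQHolonomic (f + g) := by
  have := isQHolonomic_iff_finiteDimensional.mp hf
  have := isQHolonomic_iff_finiteDimensional.mp hg
  exact isQHolonomic_iff_finiteDimensional.mpr <|
    Submodule.finiteDimensional_of_le (shiftSpan_add_le f g)
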